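/- arXiv:2006.06482 — 3 statements merged into one kernel-verified Lean document; each statement's English description precedes it below -/
import Mathlib

section
/- Let 𝓕 = {f₁,…,f₆} ⊂ ℤ³ and C > 0 be such that Σ_{i=1}^{6} f_i⊗f_i = C·Id and {f_i⊗f_i}_{i=1}^{6} forms a basis of the space 𝕊 of symmetric 3×3 real matrices. Then there exists N₀ = N₀(𝓕) > 0 such that for every 0 < N ≤ N₀ one can find smooth functions Γ_{f_i} : S_N → (0,∞), i = 1,…,6, where S_N := {Id − K : K ∈ 𝕊, |K|_∞ ≤ N}, satisfying Id − K = Σ_{i=1}^{6} Γ_{f_i}(Id−K)² (f_i⊗f_i) for all Id − K ∈ S_N. -/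
open Real

noncomputable section

/-- `3 × 3` real matrices, written as nested functions so that Pi-type norms apply. -/
abbrev M3 : Type := Fin 3 → Fin 3 → ℝ

/-- The identity `3 × 3` matrix. -/
def Idm : M3 := fun i j => if i = j then 1 else 0

/-- The domain `S_N = {Id - K : K symmetric, |K|_∞ ≤ N}`. -/
def SN (N : ℝ) : Set M3 :=
  {X | ∃ K : M3, (∀ l m, K l m = K m l) ∧ (∀ l m, |K l m| ≤ N) ∧ X = Idm - K}

/-- **Geometric Lemma I** (Lemma 3.1 of De Lellis–Kwon). Given `f₁,…,f₆ ∈ ℤ³` with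
`Σ fᵢ⊗fᵢ = C·Id` and `{fᵢ⊗fᵢ}` a basis of the symmetric `3×3` matrices, there is `N₀ > 0`
such that for every `0 < N ≤ N₀` there are smooth positive functions `Γ_{fᵢ}` on `S_N` with
`Id - K = Σ Γ_{fᵢ}(Id-K)² fᵢ⊗fᵢ` on `S_N`. -/
theorem geometric_lemma_I (f : Fin 6 → Fin 3 → ℤ) (C : ℝ) (hC : 0 < C)
    (hid : ∀ l m : Fin 3, (∑ i, (f i l : ℝ) * (f i m : ℝ)) = C * Idm l m)
    (hindep : LinearIndependent ℝ
      (fun i : Fin 6 => (fun l m => (f i l : ℝ) * (f i m : ℝ) : M3)))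
    (hspan : ∀ A : M3, (∀ l m, A l m = A m l) →
      A ∈ Submodule.span ℝ
        (Set.range (fun i : Fin 6 => (fun l m => (f i l : ℝ) * (f i m : ℝ) : M3)))) :
    ∃ N₀ : ℝ, 0 < N₀ ∧ ∀ N : ℝ, 0 < N → N ≤ N₀ →
      ∃ Γ : Fin 6 → M3 → ℝ,
        (∀ i, ContDiffOn ℝ (⊤ : ℕ∞) (Γ i) (SN N)) ∧
        (∀ i, ∀ X ∈ SN N, 0 < Γ i X) ∧
        (∀ X ∈ SN N, ∀ l m : Fin 3,
          X l m = ∑ i, (Γ i X)^2 * ((f i l : ℝ) * (f i m : ℝ))) := by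
  classical
  set g : Fin 6 → M3 := fun i => (fun l m => (f i l : ℝ) * (f i m : ℝ) : M3) with hgdef
  let b : Module.Basis (Fin 6) ℝ (Submodule.span ℝ (Set.range g)) := Module.Basis.span hindep
  have hb : ∀ i, (b i : M3) = g i := fun i => congrArg Subtype.val (Module.Basis.span_apply hindep i)
  -- symmetrization projection
  let P : M3 →ₗ[ℝ] M3 :=
    { toFun := fun X => fun l m => (X l m + X m l) / 2
      map_add' := by intro X Y; funext l m; simp [Pi.add_apply]; ring
      map_smul' := by intro r X; funext l m; simp [Pi.smul_apply, smul_eq_mul]; ring }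
  have hPmem : ∀ X : M3, P X ∈ Submodule.span ℝ (Set.range g) := by
    intro X
    exact hspan _ (fun l m => by show (X l m + X m l) / 2 = (X m l + X l m) / 2; ring)
  let P' : M3 →ₗ[ℝ] (Submodule.span ℝ (Set.range g)) := P.codRestrict _ hPmem
  let c : Fin 6 → (M3 →ₗ[ℝ] ℝ) := fun i => (b.coord i).comp P'
  have hPfix : ∀ X : M3, (∀ l m, X l m = X m l) → P X = X := by
    intro X h; funext l m
    show (X l m + X m l) / 2 = X l m
    rw [← h l m]; ring
  have hcrepr : ∀ (X : M3) (hXV : X ∈ Submodule.span ℝ (Set.range g)),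
      (∀ l m, X l m = X m l) → ∀ i, c i X = b.repr ⟨X, hXV⟩ i := by
    intro X hXV h i
    have hP'X : P' X = ⟨X, hXV⟩ := Subtype.ext (hPfix X h)
    simp only [c, LinearMap.comp_apply, hP'X, Module.Basis.coord_apply]
  have hcX : ∀ X : M3, (∀ l m, X l m = X m l) → ∀ l m,
      X l m = ∑ i, c i X * ((f i l : ℝ) * (f i m : ℝ)) := by
    intro X h l m
    have hXV : X ∈ Submodule.span ℝ (Set.range g) := hspan X h
    have h1 : (⟨X, hXV⟩ : Submodule.span ℝ (Set.range g))
        = ∑ i, b.repr ⟨X, hXV⟩ i • b i := (b.sum_repr _).symm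
    have h2 : X = ∑ i, b.repr ⟨X, hXV⟩ i • g i := by
      have := congrArg Subtype.val h1
      simp only [Submodule.coe_sum, SetLike.val_smul, hb] at this; exact this
    have h3 : X l m = ∑ i, b.repr ⟨X, hXV⟩ i * g i l m := by
      conv_lhs => rw [h2]
      simp [Finset.sum_apply]
    rw [h3]
    exact Finset.sum_congr rfl fun i _ => by rw [hcrepr X hXV h i]
  -- symmetry of Idm and value of c at Idm
  have hIdsym : ∀ l m : Fin 3, Idm l m = Idm m l := by
    intro l m; simp [Idm, eq_comm]
  have hIdV : Idm ∈ Submodule.span ℝ (Set.range g) := hspan _ hIdsym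
  have hIdsum : Idm = ∑ i, (1 / C) • g i := by
    funext l m
    have := hid l m
    simp only [Finset.sum_apply, Pi.smul_apply, smul_eq_mul]
    rw [← Finset.mul_sum]
    have : (∑ i, g i l m) = C * Idm l m := hid l m
    rw [this]; field_simp
  have hcId : ∀ i, c i Idm = 1 / C := by
    intro i
    have h1 : (⟨Idm, hIdV⟩ : Submodule.span ℝ (Set.range g)) = ∑ j, (1 / C) • b j := by
      apply Subtype.ext
      simp only [Submodule.coe_sum, SetLike.val_smul, hb]
      rw [hIdsum]
    rw [hcrepr Idm hIdV hIdsym i, h1]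
    exact congrFun (b.repr_sum_self (fun _ : Fin 6 => (1 : ℝ) / C)) i
  have hcont : ∀ i, Continuous (c i) := fun i => (c i).continuous_of_finiteDimensional
  -- positivity neighborhoods
  have hball : ∀ i : Fin 6, ∃ ε > 0, ∀ X : M3, dist X Idm < ε → 0 < c i X := by
    intro i
    have hU : IsOpen ((c i) ⁻¹' Set.Ioi (0 : ℝ)) := isOpen_Ioi.preimage (hcont i)
    have hmem : Idm ∈ (c i) ⁻¹' Set.Ioi (0 : ℝ) := by
      simp only [Set.mem_preimage, Set.mem_Ioi, hcId i]
      positivity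
    rcases Metric.isOpen_iff.mp hU Idm hmem with ⟨ε, hε, hsub⟩
    exact ⟨ε, hε, fun X hX => hsub (by simpa [Metric.mem_ball] using hX)⟩
  choose ε hεpos hε using hball
  refine ⟨(Finset.univ.inf' Finset.univ_nonempty ε) / 2, by
      have : 0 < Finset.univ.inf' Finset.univ_nonempty ε :=
        (Finset.lt_inf'_iff _).mpr fun i _ => hεpos i
      linarith, ?_⟩
  intro N hN hNle
  have hcpos : ∀ X ∈ SN N, ∀ i, 0 < c i X := by
    rintro X ⟨K, hKsym, hKb, rfl⟩ i
    apply hε i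
    have hdist : dist (Idm - K) Idm = ‖K‖ := by
      rw [dist_eq_norm]
      simp
    rw [hdist]
    have hKnorm : ‖K‖ ≤ N := by
      rw [pi_norm_le_iff_of_nonneg hN.le]
      intro l
      rw [pi_norm_le_iff_of_nonneg hN.le]
      intro m
      simpa [Real.norm_eq_abs] using hKb l m
    have hinf : Finset.univ.inf' Finset.univ_nonempty ε ≤ ε i :=
      Finset.inf'_le _ (Finset.mem_univ i)
    have hεi : 0 < ε i := hεpos i
    have hltinf : (Finset.univ.inf' Finset.univ_nonempty ε) / 2
        < Finset.univ.inf' Finset.univ_nonempty ε := by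
      have : 0 < Finset.univ.inf' Finset.univ_nonempty ε :=
        (Finset.lt_inf'_iff _).mpr fun j _ => hεpos j
      linarith
    linarith
  have hsymSN : ∀ X ∈ SN N, ∀ l m, X l m = X m l := by
    rintro X ⟨K, hKsym, hKb, rfl⟩ l m
    simp [Pi.sub_apply, hIdsym l m, hKsym l m]
  refine ⟨fun i X => Real.sqrt (c i X), ?_, ?_, ?_⟩
  · intro i X hX
    have hpos := hcpos X hX i
    exact ((Real.contDiffAt_sqrt (ne_of_gt hpos)).comp X
      ((c i).toContinuousLinearMap.contDiff.contDiffAt)).contDiffWithinAt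
  · intro i X hX
    exact Real.sqrt_pos.mpr (hcpos X hX i)
  · intro X hX l m
    have := hcX X (hsymSN X hX) l m
    rw [this]
    refine Finset.sum_congr rfl fun i _ => ?_
    rw [Real.sq_sqrt (hcpos X hX i).le]
end
end

section
/- Suppose {f₁,f₂,f₃} ⊂ ℤ³∖{0} is an orthogonal frame (three pairwise orthogonal nonzero integer vectors) and f₄ = −(f₁+f₂+f₃). Then for every N₀ > 0 there exist affine functions Γ_{f_k} : V_{N₀} → [N₀,∞), k = 1,…,4, with V_{N₀} := {u ∈ ℝ³ : |u| ≤ N₀}, such that u = Σ_{k=1}^{4} Γ_{f_k}(u) f_k for all u ∈ V_{N₀}. -/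
open Real

noncomputable section

/-- Points of `ℝ³`. -/
abbrev V3 : Type := Fin 3 → ℝ

/-- Euclidean dot product on `ℝ³`. -/
def dot3 (x y : V3) : ℝ := ∑ i, x i * y i

/-- Euclidean norm on `ℝ³`. -/
def enorm3 (x : V3) : ℝ := Real.sqrt (∑ i, (x i)^2)

/-!
Take `Γ_k(u) = 2N₀ + ⟨f_k, u⟩ / |f_k|²` for `k ≤ 3` and `Γ_4 = 2N₀`. The constant parts cancel
because `f₁ + f₂ + f₃ + f₄ = 0`, the linear parts reproduce `u` by orthogonal expansion in the
basis `f₁, f₂, f₃`, and `|⟨f_k, u⟩| / |f_k|² ≤ |u| / |f_k| ≤ N₀` because a nonzero integer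
vector has norm at least `1`.
-/

open scoped InnerProductSpace
open Module

theorem sum_inner_div_norm_sq_smul_eq_self {E ι : Type*} [NormedAddCommGroup E]
    [InnerProductSpace ℝ E] [FiniteDimensional ℝ E] [Fintype ι] {v : ι → E}
    (hv0 : ∀ i, v i ≠ 0) (hv : Pairwise fun i j => ⟪v i, v j⟫_ℝ = 0)
    (hcard : Fintype.card ι = finrank ℝ E) (u : E) :
    ∑ i, (⟪v i, u⟫_ℝ / ‖v i‖ ^ 2) • v i = u := by
  let b := basisOfLinearIndependentOfCardEqFinrank' v
    (linearIndependent_of_ne_zero_of_inner_eq_zero hv0 hv) hcard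
  refine InnerProductSpace.ext_inner_left_basis b fun j => ?_
  rw [coe_basisOfLinearIndependentOfCardEqFinrank', inner_sum, Finset.sum_eq_single j]
  · rw [inner_smul_right, real_inner_self_eq_norm_sq]
    field_simp [norm_ne_zero_iff.mpr (hv0 j)]
  · intro i _ hij
    rw [inner_smul_right, hv hij.symm, mul_zero]
  · simp

theorem abs_inner_inv_norm_sq_smul_le {E : Type*} [NormedAddCommGroup E]
    [InnerProductSpace ℝ E] {v : E} (hv : 1 ≤ ‖v‖) (u : E) :
    |⟪(‖v‖ ^ 2)⁻¹ • v, u⟫_ℝ| ≤ ‖u‖ := by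
  have hv0 : 0 < ‖v‖ := one_pos.trans_le hv
  rw [real_inner_smul_left, abs_mul, abs_of_pos (by positivity)]
  calc (‖v‖ ^ 2)⁻¹ * |⟪v, u⟫_ℝ| ≤ (‖v‖ ^ 2)⁻¹ * (‖v‖ * ‖u‖) := by
        gcongr; exact abs_real_inner_le_norm v u
    _ = ‖u‖ / ‖v‖ := by field_simp
    _ ≤ ‖u‖ := div_le_self (norm_nonneg u) hv

theorem one_le_norm_toLp_intCast {n : Type*} [Fintype n] {z : n → ℤ} (hz : z ≠ 0) :
    1 ≤ ‖WithLp.toLp 2 (fun i => (z i : ℝ))‖ := by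
  obtain ⟨i, hi⟩ := Function.ne_iff.mp hz
  calc (1 : ℝ) ≤ |(z i : ℝ)| := by exact_mod_cast Int.one_le_abs hi
    _ = ‖WithLp.toLp 2 (fun i => (z i : ℝ)) i‖ := by simp
    _ ≤ _ := PiLp.norm_apply_le _ i

theorem dot3_eq_inner (x y : V3) :
    dot3 x y = ⟪(WithLp.toLp 2 x : EuclideanSpace ℝ (Fin 3)), WithLp.toLp 2 y⟫_ℝ := by
  simp [dot3, PiLp.inner_apply, mul_comm]

theorem enorm3_eq_norm (x : V3) :
    enorm3 x = ‖(WithLp.toLp 2 x : EuclideanSpace ℝ (Fin 3))‖ := by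
  simp [enorm3, EuclideanSpace.norm_eq]

theorem exists_affine_coeffs_of_orthogonal_frame {E : Type*} [NormedAddCommGroup E]
    [InnerProductSpace ℝ E] [FiniteDimensional ℝ E] {n : ℕ} (F : Fin (n + 1) → E)
    (hdim : finrank ℝ E = n) (hF : ∀ m : Fin n, 1 ≤ ‖F m.castSucc‖)
    (horth : Pairwise fun l m : Fin n => ⟪F l.castSucc, F m.castSucc⟫_ℝ = 0)
    (hlast : F (Fin.last n) = -∑ m : Fin n, F m.castSucc) {N : ℝ} (hN : 0 ≤ N) :
    ∃ w : Fin (n + 1) → E, ∀ u : E, ‖u‖ ≤ N →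
      (∀ k, N ≤ 2 * N + ⟪w k, u⟫_ℝ) ∧ ∑ k, (2 * N + ⟪w k, u⟫_ℝ) • F k = u := by
  set v : Fin n → E := fun m => F m.castSucc
  refine ⟨Fin.lastCases 0 fun m => (‖v m‖ ^ 2)⁻¹ • v m, fun u hu => ⟨fun k => ?_, ?_⟩⟩
  · induction k using Fin.lastCases with
    | last =>
      simp only [Fin.lastCases_last, inner_zero_left, add_zero]
      linarith
    | cast m =>
      have := neg_abs_le ⟪(‖v m‖ ^ 2)⁻¹ • v m, u⟫_ℝ
      have := abs_inner_inv_norm_sq_smul_le (hF m) u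
      simp only [Fin.lastCases_castSucc]
      linarith
  · have hexp := sum_inner_div_norm_sq_smul_eq_self (v := v)
      (fun m => norm_ne_zero_iff.mp (one_pos.trans_le (hF m)).ne') horth (by simp [hdim]) u
    rw [Fin.sum_univ_castSucc, hlast]
    simp only [Fin.lastCases_last, Fin.lastCases_castSucc, inner_zero_left, add_zero, add_smul,
      Finset.sum_add_distrib, real_inner_smul_left, smul_neg, ← Finset.smul_sum, inv_mul_eq_div]
    linear_combination (norm := module) hexp

/-- **Geometric Lemma II** (Lemma 3.2 of De Lellis–Kwon). If `f₁,f₂,f₃ ∈ ℤ³∖{0}` are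
pairwise orthogonal and `f₄ = -(f₁+f₂+f₃)`, then for every `N₀ > 0` there are affine
functions `Γ_{f_k} : V_{N₀} → [N₀,∞)` with `u = Σ_k Γ_{f_k}(u) f_k` on `V_{N₀}`. -/
theorem geometric_lemma_II (f : Fin 4 → Fin 3 → ℤ)
    (hne : ∀ k : Fin 4, k ≠ 3 → f k ≠ 0)
    (horth : ∀ k l : Fin 4, k ≠ 3 → l ≠ 3 → k ≠ l → (∑ i, f k i * f l i) = 0)
    (hf4 : ∀ i : Fin 3, f 3 i = -(f 0 i + f 1 i + f 2 i)) :
    ∀ N₀ : ℝ, 0 < N₀ →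
      ∃ Γ : Fin 4 → V3 → ℝ,
        -- each Γ k is affine
        (∀ k : Fin 4, ∃ (c : ℝ) (w : V3), ∀ u : V3, Γ k u = c + dot3 w u) ∧
        -- with values in [N₀, ∞) on V_{N₀}
        (∀ k : Fin 4, ∀ u : V3, enorm3 u ≤ N₀ → N₀ ≤ Γ k u) ∧
        -- the decomposition u = Σ_k Γ_{f_k}(u) f_k on V_{N₀}
        (∀ u : V3, enorm3 u ≤ N₀ → ∀ i : Fin 3,
          u i = ∑ k, Γ k u * (f k i : ℝ)) := by
  intro N₀ hN₀
  let F : Fin 4 → EuclideanSpace ℝ (Fin 3) := fun k => WithLp.toLp 2 fun i => (f k i : ℝ)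
  have hF : ∀ m : Fin 3, 1 ≤ ‖F m.castSucc‖ := fun m =>
    one_le_norm_toLp_intCast (hne _ (Fin.castSucc_lt_last m).ne)
  have hForth : Pairwise fun l m : Fin 3 => ⟪F l.castSucc, F m.castSucc⟫_ℝ = 0 := by
    intro l m hlm
    rw [← dot3_eq_inner, dot3]
    exact_mod_cast horth _ _ (Fin.castSucc_lt_last l).ne (Fin.castSucc_lt_last m).ne
      (Fin.castSucc_injective _ |>.ne hlm)
  have hFlast : F (Fin.last 3) = -∑ m : Fin 3, F m.castSucc := by
    ext i
    simp [F, Fin.sum_univ_three, hf4]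
  obtain ⟨w, hw⟩ := exists_affine_coeffs_of_orthogonal_frame F (by simp) hF hForth hFlast hN₀.le
  refine ⟨fun k u => 2 * N₀ + dot3 (w k).ofLp u, fun k => ⟨2 * N₀, w k, fun u => rfl⟩,
    fun k u hu => ?_, fun u hu i => ?_⟩
  · rw [enorm3_eq_norm] at hu
    simpa [dot3_eq_inner] using (hw _ hu).1 k
  · rw [enorm3_eq_norm] at hu
    simpa [dot3_eq_inner, F] using (congrArg (· i) (hw _ hu).2).symm
end
end

section
/- Let Ω ⊂ ℝ^m and let F : Ω → ℝ and Ψ : ℝⁿ → Ω be smooth functions whose derivatives appearing below are bounded. Then for each integer N ≥ 1: ‖∇^N(F∘Ψ)‖₀ ≤ K(n,m,N)(‖∇F‖₀ ‖∇Ψ‖_{N−1} + ‖∇F‖_{N−1} ‖Ψ‖₀^{N−1} ‖Ψ‖_N) and ‖∇^N(F∘Ψ)‖₀ ≤ K(n,m,N)(‖∇F‖₀ ‖∇Ψ‖_{N−1} + ‖∇F‖_{N−1} ‖∇Ψ‖₀^N), where K(n,m,N) depends only on n, m, and N. -/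
noncomputable section

open ContDiff Set Filter Topology

section Aux


variable {E : Type*} {F : Type*} [NormedAddCommGroup E] [NormedSpace ℝ E]
  [NormedAddCommGroup F] [NormedSpace ℝ F]

/-- First-order Taylor estimate from a Lipschitz bound on the derivative. -/
lemma taylor_one_bound (v : E → F) (hv : Differentiable ℝ v) (L : ℝ) (hL : 0 ≤ L)
    (hlip : ∀ a b : E, ‖fderiv ℝ v a - fderiv ℝ v b‖ ≤ L * ‖a - b‖) (x y : E) :
    ‖v y - v x - fderiv ℝ v x (y - x)‖ ≤ L * ‖y - x‖ ^ 2 := by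
  set w := y - x with hw
  set g : ℝ → F := fun t => v (x + t • w) - t • (fderiv ℝ v x w) with hg
  have hγ : ∀ t : ℝ, HasDerivAt (fun s : ℝ => x + s • w) w t := by
    intro t
    simpa using ((hasDerivAt_id t).smul_const w).const_add x
  have hg' : ∀ t : ℝ, HasDerivAt g (fderiv ℝ v (x + t • w) w - fderiv ℝ v x w) t := by
    intro t
    have h2 : HasDerivAt (fun t : ℝ => t • (fderiv ℝ v x w)) (fderiv ℝ v x w) t := by
      simpa using (hasDerivAt_id t).smul_const (fderiv ℝ v x w)
    exact ((hv (x + t • w)).hasFDerivAt.comp_hasDerivAt t (hγ t)).sub h2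
  have bound : ∀ t ∈ Ico (0:ℝ) 1,
      ‖fderiv ℝ v (x + t • w) w - fderiv ℝ v x w‖ ≤ L * ‖w‖ ^ 2 := by
    intro t ht
    have h1 : ‖fderiv ℝ v (x + t • w) w - fderiv ℝ v x w‖
        ≤ ‖fderiv ℝ v (x + t • w) - fderiv ℝ v x‖ * ‖w‖ := by
      have := (fderiv ℝ v (x + t • w) - fderiv ℝ v x).le_opNorm w
      simpa using this
    have h2 : ‖fderiv ℝ v (x + t • w) - fderiv ℝ v x‖ ≤ L * (t * ‖w‖) := by
      have := hlip (x + t • w) x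
      simpa [norm_smul, abs_of_nonneg ht.1] using this
    calc ‖fderiv ℝ v (x + t • w) w - fderiv ℝ v x w‖ ≤ (L * (t * ‖w‖)) * ‖w‖ := by
          refine h1.trans ?_
          exact mul_le_mul_of_nonneg_right h2 (norm_nonneg _)
      _ ≤ L * ‖w‖ ^ 2 := by nlinarith [mul_nonneg (mul_nonneg hL (mul_nonneg (norm_nonneg w) (norm_nonneg w))) (sub_nonneg.2 ht.2.le)]
  have key := norm_image_sub_le_of_norm_deriv_le_segment'
    (f := g) (f' := fun t => fderiv ℝ v (x + t • w) w - fderiv ℝ v x w)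
    (fun t _ => (hg' t).hasDerivWithinAt) bound 1 (right_mem_Icc.2 zero_le_one)
  have e1 : g 1 = v y - fderiv ℝ v x w := by simp [hg, hw]
  have e0 : g 0 = v x := by simp [hg]
  rw [e1, e0] at key
  calc ‖v y - v x - fderiv ℝ v x w‖ = ‖v y - fderiv ℝ v x w - v x‖ := by rw [sub_right_comm]
    _ ≤ L * ‖w‖ ^ 2 * (1 - 0) := key
    _ = L * ‖w‖ ^ 2 := by ring

/-- If `v` is bounded by `c0` and its derivative is `L`-Lipschitz, then
`‖fderiv ℝ v x‖ ≤ 2c0/h + hL` for every `h > 0`. -/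
lemma fderiv_bound_of_lip (v : E → F) (hv : Differentiable ℝ v)
    (c0 L h : ℝ) (hL : 0 ≤ L) (hh : 0 < h)
    (hc0 : ∀ x, ‖v x‖ ≤ c0)
    (hlip : ∀ a b : E, ‖fderiv ℝ v a - fderiv ℝ v b‖ ≤ L * ‖a - b‖) (x : E) :
    ‖fderiv ℝ v x‖ ≤ 2 * c0 / h + h * L := by
  have hc0nn : 0 ≤ c0 := (norm_nonneg _).trans (hc0 x)
  have hbnn : 0 ≤ 2 * c0 / h + h * L := by positivity
  refine ContinuousLinearMap.opNorm_le_bound _ hbnn (fun d => ?_)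
  rcases eq_or_ne d 0 with rfl | hd
  · simp
  have hdn : 0 < ‖d‖ := norm_pos_iff.2 hd
  set s : ℝ := h / ‖d‖ with hs
  have hspos : 0 < s := by positivity
  set y : E := x + s • d with hy
  have hyx : y - x = s • d := by simp [hy]
  have hnyx : ‖y - x‖ = h := by
    rw [hyx, norm_smul, Real.norm_of_nonneg hspos.le, hs]
    field_simp
  have key := taylor_one_bound v hv L hL hlip x y
  have h1 : ‖fderiv ℝ v x (y - x)‖ ≤ 2 * c0 + L * h ^ 2 := by
    have h2 : ‖fderiv ℝ v x (y - x)‖ ≤ ‖v y - v x‖ + ‖v y - v x - fderiv ℝ v x (y - x)‖ := by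
      have := norm_sub_le (v y - v x) (v y - v x - fderiv ℝ v x (y - x))
      simpa using this
    have h3 : ‖v y - v x‖ ≤ 2 * c0 := by
      calc ‖v y - v x‖ ≤ ‖v y‖ + ‖v x‖ := norm_sub_le _ _
        _ ≤ 2 * c0 := by have := hc0 y; have := hc0 x; linarith
    calc ‖fderiv ℝ v x (y - x)‖ ≤ ‖v y - v x‖ + ‖v y - v x - fderiv ℝ v x (y - x)‖ := h2
      _ ≤ 2 * c0 + L * ‖y - x‖ ^ 2 := by gcongr
      _ = 2 * c0 + L * h ^ 2 := by rw [hnyx]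
  have h4 : ‖fderiv ℝ v x (y - x)‖ = s * ‖fderiv ℝ v x d‖ := by
    rw [hyx, map_smul, norm_smul, Real.norm_of_nonneg hspos.le]
  rw [h4] at h1
  have h5 : ‖fderiv ℝ v x d‖ ≤ (2 * c0 + L * h ^ 2) / s := by
    rw [le_div_iff₀ hspos]; linarith
  have h6 : (2 * c0 + L * h ^ 2) / s = (2 * c0 / h + h * L) * ‖d‖ := by
    have hdne : ‖d‖ ≠ 0 := hdn.ne'
    rw [hs, div_div_eq_mul_div]
    field_simp
  rw [h6] at h5
  exact h5

/-- Step inequality: the middle derivative is controlled by neighbors. -/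
lemma iteratedFDeriv_middle_bound (u : E → F) (hu : ContDiff ℝ ∞ u) (j : ℕ)
    (a b h : ℝ) (hh : 0 < h)
    (ha : ∀ x, ‖iteratedFDeriv ℝ j u x‖ ≤ a)
    (hb : ∀ x, ‖iteratedFDeriv ℝ (j+2) u x‖ ≤ b) (x : E) :
    ‖iteratedFDeriv ℝ (j+1) u x‖ ≤ 2 * a / h + h * b := by
  have hbnn : 0 ≤ b := (norm_nonneg _).trans (hb x)
  set v := iteratedFDeriv ℝ j u with hv
  have hvsm : ContDiff ℝ ∞ v := hu.iteratedFDeriv_right (by exact_mod_cast le_rfl)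
  have hwsm : ContDiff ℝ ∞ (iteratedFDeriv ℝ (j+1) u) :=
    hu.iteratedFDeriv_right (by exact_mod_cast le_rfl)
  have hnorm1 : ∀ y, ‖fderiv ℝ v y‖ = ‖iteratedFDeriv ℝ (j+1) u y‖ := by
    intro y
    rw [hv, fderiv_iteratedFDeriv]
    simp
    exact LinearIsometryEquiv.norm_map _ _
  have hlip : ∀ p q : E, ‖fderiv ℝ v p - fderiv ℝ v q‖ ≤ b * ‖p - q‖ := by
    intro p q
    have hfd : ∀ y : E, ‖fderiv ℝ (iteratedFDeriv ℝ (j+1) u) y‖ ≤ b := by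
      intro y
      rw [fderiv_iteratedFDeriv]
      simp only [Function.comp_apply]
      rw [LinearIsometryEquiv.norm_map]
      exact hb y
    have hdiff : ∀ y ∈ (univ : Set E), DifferentiableAt ℝ (iteratedFDeriv ℝ (j+1) u) y :=
      fun y _ => (hwsm.differentiable (by simp)).differentiableAt
    have key := Convex.norm_image_sub_le_of_norm_fderiv_le hdiff (fun y _ => hfd y)
      convex_univ (mem_univ q) (mem_univ p)
    calc ‖fderiv ℝ v p - fderiv ℝ v q‖
        = ‖iteratedFDeriv ℝ (j+1) u p - iteratedFDeriv ℝ (j+1) u q‖ := by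
          rw [hv, fderiv_iteratedFDeriv]
          simp only [Function.comp_apply]
          rw [← LinearIsometryEquiv.map_sub, LinearIsometryEquiv.norm_map]
      _ ≤ b * ‖p - q‖ := key
  have hdiffv : Differentiable ℝ v := hvsm.differentiable (by simp)
  have final := fderiv_bound_of_lip v hdiffv a b h hbnn hh ha hlip x
  rw [hnorm1 x] at final
  exact final

/-- Additive parametrized Landau–Kolmogorov interpolation inequality. -/
lemma interp_additive (M : ℕ) :
    ∃ C : ℝ, 1 ≤ C ∧ ∀ (u : E → F), ContDiff ℝ ∞ u →
      ∀ c0 cM D : ℝ, (∀ x, ‖u x‖ ≤ c0) → (∀ x, ‖iteratedFDeriv ℝ M u x‖ ≤ cM) →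
      (∀ j, j ≤ M → ∀ x, ‖iteratedFDeriv ℝ j u x‖ ≤ D) →
      ∀ h : ℝ, 0 < h → ∀ j, j ≤ M → ∀ x,
        ‖iteratedFDeriv ℝ j u x‖ ≤ C * (c0 / h ^ j + h ^ (M - j) * cM) := by
  induction M with
  | zero =>
    refine ⟨1, le_rfl, ?_⟩
    intro u hu c0 cM D hc0 hcM hD h hh j hj x
    have hj0 : j = 0 := by omega
    subst hj0
    have hcMnn : 0 ≤ cM := (norm_nonneg _).trans (hcM x)
    have h1 : ‖iteratedFDeriv ℝ 0 u x‖ = ‖u x‖ := norm_iteratedFDeriv_zero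
    have h2 := hc0 x
    simp only [pow_zero, Nat.zero_sub, one_mul, div_one]
    rw [h1]; linarith
  | succ M IH =>
    obtain ⟨C, hC1, hC⟩ := IH
    have hCpos : (0:ℝ) < C := by linarith
    rcases Nat.eq_zero_or_pos M with rfl | hM
    · -- M + 1 = 1 : both endpoints are directly available
      refine ⟨1, le_rfl, ?_⟩
      intro u hu c0 cM D hc0 hcM hD h hh j hj x
      have hc0nn : 0 ≤ c0 := (norm_nonneg _).trans (hc0 x)
      have hcMnn : 0 ≤ cM := (norm_nonneg _).trans (hcM x)
      interval_cases j
      · have h1 : ‖iteratedFDeriv ℝ 0 u x‖ = ‖u x‖ := norm_iteratedFDeriv_zero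
        have h2 := hc0 x
        have h3 : 0 ≤ h ^ (1 - 0) * cM := by positivity
        simp only [pow_zero, one_mul, div_one]
        rw [h1]; linarith
      · have h2 := hcM x
        have h3 : 0 ≤ c0 / h ^ 1 := by positivity
        have h4 : (1:ℕ) - 1 = 0 := rfl
        rw [h4, pow_zero]
        linarith
    · -- here 1 ≤ M
      set C2 : ℝ := 2 * (4*C)^M with hC2def
      have h4Cpos : (0:ℝ) < 4 * C := by linarith
      have h4C1 : (1:ℝ) ≤ (4*C)^M := one_le_pow₀ (by linarith)
      have hC2_1 : 1 ≤ C2 := by rw [hC2def]; nlinarith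
      refine ⟨C * (1 + C2), by nlinarith, ?_⟩
      intro u hu c0 cM1 D hc0 hcM1 hD h hh j hj x
      have hc0nn : 0 ≤ c0 := (norm_nonneg _).trans (hc0 x)
      have hcM1nn : 0 ≤ cM1 := (norm_nonneg _).trans (hcM1 x)
      have hD' : ∀ j, j ≤ M → ∀ y, ‖iteratedFDeriv ℝ j u y‖ ≤ D :=
        fun j hj y => hD j (by omega) y
      have hDnn : 0 ≤ max D 0 := le_max_right _ _
      -- Claim A: parametrized bound on the M-th derivative
      have claimA : ∀ δ : ℝ, 0 < δ → ∀ y,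
          ‖iteratedFDeriv ℝ M u y‖ ≤ C2 * (c0 / δ ^ M + δ * cM1) := by
        intro δ hδ
        set A : ℝ := (4*C)^(M-1) with hAdef
        have hApos : (0:ℝ) < A := pow_pos h4Cpos _
        have hA1 : (1:ℝ) ≤ A := one_le_pow₀ (by linarith)
        have hpow4 : (4*C)^M = (4*C) * A := by
          rw [hAdef, ← pow_succ']; congr 1; omega
        set E0 : ℝ := (4*C)^M * (c0 / δ ^ M + δ * cM1) with hE0def
        have hE0nn : 0 ≤ E0 := by
          apply mul_nonneg (pow_pos h4Cpos M).le
          positivity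
        have key : ∀ β : ℝ, 0 ≤ β → (∀ y, ‖iteratedFDeriv ℝ M u y‖ ≤ β) →
            ∀ y, ‖iteratedFDeriv ℝ M u y‖ ≤ E0 + β / 2 := by
          intro β hβ hbound y
          set g : ℝ := δ / (4*C) with hgdef
          have hgpos : 0 < g := by positivity
          have IH1 : ∀ z, ‖iteratedFDeriv ℝ (M-1) u z‖
              ≤ C * (c0 / g ^ (M-1) + g * β) := by
            intro z
            have := hC u hu c0 β D hc0 hbound hD' g hgpos (M-1) (by omega) z
            have hM1 : M - (M-1) = 1 := by omega
            rw [hM1, pow_one] at this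
            exact this
          have hb' : ∀ z, ‖iteratedFDeriv ℝ (M-1+2) u z‖ ≤ cM1 := by
            intro z
            rw [(by omega : M-1+2 = M+1)]
            exact hcM1 z
          have step := iteratedFDeriv_middle_bound u hu (M-1)
            (C * (c0 / g ^ (M-1) + g * β)) cM1 δ hδ IH1 hb' y
          rw [(by omega : M-1+1 = M)] at step
          have hgpow : g ^ (M-1) = δ ^ (M-1) / A := by
            rw [hgdef, hAdef, div_pow]
          have hδM : δ ^ M = δ ^ (M-1) * δ := by
            rw [← pow_succ]; congr 1; omega
          have heq : 2 * (C * (c0 / g ^ (M-1) + g * β)) / δ + δ * cM1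
              = 2 * C * A * (c0 / δ ^ M) + β / 2 + δ * cM1 := by
            rw [hgpow, hgdef, hδM]
            have hδne : δ ≠ 0 := hδ.ne'
            have hAne : A ≠ 0 := hApos.ne'
            have hCne : C ≠ 0 := hCpos.ne'
            have hδpne : δ ^ (M-1) ≠ 0 := pow_ne_zero _ hδne
            field_simp
            ring
          rw [heq] at step
          refine step.trans ?_
          have hc0δ : 0 ≤ c0 / δ ^ M := by positivity
          have hδcM : 0 ≤ δ * cM1 := by positivity
          rw [hE0def, hpow4]
          nlinarith [mul_nonneg (mul_nonneg hCpos.le hApos.le) hc0δ,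
            mul_nonneg (mul_nonneg h4Cpos.le hApos.le) hδcM,
            mul_nonneg hApos.le hδcM]
        have iter : ∀ k : ℕ, ∀ y,
            ‖iteratedFDeriv ℝ M u y‖ ≤ 2 * E0 + (max D 0) / 2 ^ k := by
          intro k
          induction k with
          | zero =>
            intro y
            have h1 := hD M (by omega) y
            have h2 : ‖iteratedFDeriv ℝ M u y‖ ≤ max D 0 := h1.trans (le_max_left _ _)
            simpa using by linarith
          | succ k ihk =>
            have hβnn : 0 ≤ 2 * E0 + (max D 0) / 2 ^ k := by positivity
            intro y
            have h1 := key _ hβnn ihk y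
            refine h1.trans (le_of_eq ?_)
            rw [pow_succ]
            ring
        intro y
        have htend : Tendsto (fun k : ℕ => 2 * E0 + (max D 0) / 2 ^ k)
            atTop (𝓝 (2 * E0 + 0)) := by
          apply Tendsto.add tendsto_const_nhds
          have h1 : Tendsto (fun k : ℕ => (max D 0) * (1/2:ℝ)^k) atTop (𝓝 0) := by
            simpa using (tendsto_pow_atTop_nhds_zero_of_lt_one (by norm_num : (0:ℝ) ≤ 1/2)
              (by norm_num)).const_mul (max D 0)
          refine h1.congr (fun k => ?_)
          rw [div_pow, one_pow, mul_one_div]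
        have hle := ge_of_tendsto' htend (fun k => iter k y)
        calc ‖iteratedFDeriv ℝ M u y‖ ≤ 2 * E0 + 0 := hle
          _ = C2 * (c0 / δ ^ M + δ * cM1) := by rw [hE0def, hC2def]; ring
      -- now conclude
      rcases Nat.lt_or_ge j (M+1) with hjM | hjM
      · have hjM' : j ≤ M := by omega
        have htop := claimA h hh
        have main := hC u hu c0 (C2 * (c0 / h ^ M + h * cM1)) D hc0 htop hD' h hh j hjM' x
        have hpowM : h ^ j * h ^ (M - j) = h ^ M := by
          rw [← pow_add]; congr 1; omega
        have e1 : h ^ (M - j) * (c0 / h ^ M) = c0 / h ^ j := by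
          rw [← hpowM]
          have hne : h ≠ 0 := hh.ne'
          have h1 : h ^ j ≠ 0 := pow_ne_zero _ hne
          have h2 : h ^ (M - j) ≠ 0 := pow_ne_zero _ hne
          field_simp
        have e2 : h ^ (M - j) * (h * cM1) = h ^ (M + 1 - j) * cM1 := by
          rw [← mul_assoc, ← pow_succ, (by omega : M - j + 1 = M + 1 - j)]
        have e3 : h ^ (M - j) * (C2 * (c0 / h ^ M + h * cM1))
            = C2 * (c0 / h ^ j + h ^ (M + 1 - j) * cM1) := by
          rw [mul_left_comm, mul_add, e1, e2]
        rw [e3] at main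
        refine main.trans ?_
        have hY : 0 ≤ h ^ (M + 1 - j) * cM1 := by positivity
        have hfinal : C * (1 + C2) * (c0 / h ^ j + h ^ (M + 1 - j) * cM1)
            - C * (c0 / h ^ j + C2 * (c0 / h ^ j + h ^ (M + 1 - j) * cM1))
            = C * (h ^ (M + 1 - j) * cM1) := by ring
        have hCY : 0 ≤ C * (h ^ (M + 1 - j) * cM1) := mul_nonneg hCpos.le hY
        linarith
      · have hjeq : j = M + 1 := by omega
        subst hjeq
        have h1 := hcM1 x
        have h2 : M + 1 - (M+1) = 0 := by omega
        rw [h2, pow_zero]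
        have hX : 0 ≤ c0 / h ^ (M+1) := by positivity
        nlinarith [mul_nonneg (by nlinarith : (0:ℝ) ≤ C*(1+C2)) hX,
          mul_nonneg (by nlinarith : (0:ℝ) ≤ C*(1+C2) - 1) hcM1nn]

/-- Multiplicative Landau–Kolmogorov interpolation inequality. -/
lemma interp_rpow (M : ℕ) (hM : 1 ≤ M) :
    ∃ C : ℝ, 1 ≤ C ∧ ∀ (u : E → F), ContDiff ℝ ∞ u →
      ∀ c0 cM D : ℝ, (∀ x, ‖u x‖ ≤ c0) → (∀ x, ‖iteratedFDeriv ℝ M u x‖ ≤ cM) →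
      (∀ j, j ≤ M → ∀ x, ‖iteratedFDeriv ℝ j u x‖ ≤ D) →
      ∀ j, j ≤ M → ∀ x,
        ‖iteratedFDeriv ℝ j u x‖
          ≤ C * (c0 ^ (((M:ℝ) - j)/(M:ℝ)) * cM ^ ((j:ℝ)/(M:ℝ))) := by
  obtain ⟨C, hC1, hC⟩ := interp_additive (E := E) (F := F) M
  have hCpos : (0:ℝ) < C := by linarith
  refine ⟨2*C, by linarith, ?_⟩
  intro u hu c0 cM D hc0 hcM hD j hj x
  have hc0nn : 0 ≤ c0 := (norm_nonneg _).trans (hc0 x)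
  have hcMnn : 0 ≤ cM := (norm_nonneg _).trans (hcM x)
  have hMR : (0:ℝ) < (M:ℝ) := by exact_mod_cast hM
  rcases Nat.eq_zero_or_pos j with rfl | hj1
  · -- j = 0
    simp only [Nat.cast_zero, sub_zero, zero_div, Real.rpow_zero, mul_one]
    rw [div_self hMR.ne', Real.rpow_one]
    have h1 : ‖iteratedFDeriv ℝ 0 u x‖ = ‖u x‖ := norm_iteratedFDeriv_zero
    rw [h1]
    nlinarith [hc0 x]
  rcases eq_or_ne j M with rfl | hjM
  · -- j = M
    rw [sub_self, zero_div, Real.rpow_zero, div_self hMR.ne', Real.rpow_one, one_mul]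
    nlinarith [hcM x]
  have hjltM : j < M := lt_of_le_of_ne hj hjM
  by_cases hcM0 : cM = 0
  · -- top derivative vanishes: let h → ∞
    subst hcM0
    have key : ∀ h : ℝ, 0 < h → ‖iteratedFDeriv ℝ j u x‖ ≤ C * (c0 / h ^ j) := by
      intro h hh
      have := hC u hu c0 0 D hc0 hcM hD h hh j hj x
      simpa using this
    have hlim : Tendsto (fun h : ℝ => C * (c0 / h ^ j)) atTop (𝓝 (C * 0)) := by
      apply Tendsto.const_mul
      exact tendsto_const_nhds.div_atTop (tendsto_pow_atTop (by omega))
    rw [mul_zero] at hlim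
    have hX0 : ‖iteratedFDeriv ℝ j u x‖ ≤ 0 := by
      refine ge_of_tendsto hlim ?_
      filter_upwards [eventually_gt_atTop (0:ℝ)] with h hh
      exact key h hh
    have hRHS : 0 ≤ 2*C * (c0 ^ (((M:ℝ) - j)/(M:ℝ)) * (0:ℝ) ^ ((j:ℝ)/(M:ℝ))) := by
      have := Real.rpow_nonneg hc0nn (((M:ℝ) - j)/(M:ℝ))
      have := Real.rpow_nonneg (le_refl (0:ℝ)) ((j:ℝ)/(M:ℝ))
      positivity
    linarith
  by_cases hc00 : c0 = 0
  · -- function vanishes: let h → 0⁺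
    subst hc00
    have key : ∀ h : ℝ, 0 < h → ‖iteratedFDeriv ℝ j u x‖ ≤ C * (h ^ (M-j) * cM) := by
      intro h hh
      have := hC u hu 0 cM D hc0 hcM hD h hh j hj x
      simpa using this
    have hlim : Tendsto (fun h : ℝ => C * (h ^ (M-j) * cM)) (𝓝[>] (0:ℝ))
        (𝓝 (C * ((0:ℝ) ^ (M-j) * cM))) := by
      apply Tendsto.mono_left ?_ nhdsWithin_le_nhds
      exact (continuous_const.mul ((continuous_pow (M-j)).mul continuous_const)).tendsto 0
    rw [zero_pow (by omega : M - j ≠ 0), zero_mul, mul_zero] at hlim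
    have hX0 : ‖iteratedFDeriv ℝ j u x‖ ≤ 0 := by
      refine ge_of_tendsto hlim ?_
      filter_upwards [self_mem_nhdsWithin] with h hh
      exact key h hh
    have hRHS : 0 ≤ 2*C * ((0:ℝ) ^ (((M:ℝ) - j)/(M:ℝ)) * cM ^ ((j:ℝ)/(M:ℝ))) := by
      have := Real.rpow_nonneg (le_refl (0:ℝ)) (((M:ℝ) - j)/(M:ℝ))
      have := Real.rpow_nonneg hcMnn ((j:ℝ)/(M:ℝ))
      positivity
    linarith
  · -- generic case: optimize over h
    have hc0pos : 0 < c0 := lt_of_le_of_ne hc0nn (Ne.symm hc00)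
    have hcMpos : 0 < cM := lt_of_le_of_ne hcMnn (Ne.symm hcM0)
    have hqpos : 0 < c0 / cM := div_pos hc0pos hcMpos
    set h : ℝ := (c0/cM) ^ ((1:ℝ)/(M:ℝ)) with hhdef
    have hhpos : 0 < h := Real.rpow_pos_of_pos hqpos _
    have key := hC u hu c0 cM D hc0 hcM hD h hhpos j hj x
    set e : ℝ := (j:ℝ)/(M:ℝ) with hedef
    set e' : ℝ := ((M:ℝ) - j)/(M:ℝ) with he'def
    have hpj : h ^ j = (c0/cM) ^ e := by
      rw [← Real.rpow_natCast h j, hhdef, ← Real.rpow_mul hqpos.le]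
      rw [hedef]; congr 1; ring
    have hpMj : h ^ (M - j) = (c0/cM) ^ e' := by
      rw [← Real.rpow_natCast h (M-j), hhdef, ← Real.rpow_mul hqpos.le]
      rw [he'def]; congr 1
      rw [Nat.cast_sub hj]; ring
    have he1 : 1 - e = e' := by rw [hedef, he'def]; field_simp
    have he2 : 1 - e' = e := by rw [← he1]; ring
    have t1 : c0 / h ^ j = c0 ^ e' * cM ^ e := by
      calc c0 / h ^ j = c0 / (c0 ^ e / cM ^ e) := by
            rw [hpj, Real.div_rpow hc0nn hcMnn]
        _ = c0 / c0 ^ e * cM ^ e := by rw [div_div_eq_mul_div, mul_div_right_comm]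
        _ = c0 ^ ((1:ℝ) - e) * cM ^ e := by rw [Real.rpow_sub hc0pos, Real.rpow_one]
        _ = c0 ^ e' * cM ^ e := by rw [he1]
    have t2 : h ^ (M - j) * cM = c0 ^ e' * cM ^ e := by
      calc h ^ (M - j) * cM = c0 ^ e' / cM ^ e' * cM := by
            rw [hpMj, Real.div_rpow hc0nn hcMnn]
        _ = c0 ^ e' * (cM / cM ^ e') := by ring
        _ = c0 ^ e' * cM ^ ((1:ℝ) - e') := by rw [Real.rpow_sub hcMpos, Real.rpow_one]
        _ = c0 ^ e' * cM ^ e := by rw [he2]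
    rw [t1, t2] at key
    refine key.trans (le_of_eq ?_)
    ring

lemma rpow_finset_sum {ι : Type*} (x : ℝ) (hx : 0 ≤ x) (s : Finset ι) (f : ι → ℝ)
    (hf : ∀ i ∈ s, 0 ≤ f i) : x ^ (∑ i ∈ s, f i) = ∏ i ∈ s, x ^ f i := by
  classical
  induction s using Finset.cons_induction with
  | empty => simp
  | cons a s ha ih =>
    rw [Finset.sum_cons, Finset.prod_cons,
      ← ih (fun i hi => hf i (Finset.mem_cons_of_mem hi))]
    rcases eq_or_ne (f a + ∑ i ∈ s, f i) 0 with h0 | h0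
    · have hfa : 0 ≤ f a := hf a (Finset.mem_cons_self _ _)
      have hsum : 0 ≤ ∑ i ∈ s, f i :=
        Finset.sum_nonneg (fun i hi => hf i (Finset.mem_cons_of_mem hi))
      have h1 : f a = 0 := by linarith
      have h2 : (∑ i ∈ s, f i) = 0 := by linarith
      rw [h1, h2]
      simp
    · exact Real.rpow_add' hx h0
lemma OrderedFinpartition.sum_partSize {N : ℕ} (c : OrderedFinpartition N) :
    ∑ i, c.partSize i = N := by
  classical
  have h := Fintype.card_congr c.equivSigma
  simpa [Fintype.card_sigma] using h

lemma norm_compAlongOrderedFinpartition_le {N : ℕ} {G : Type*} [NormedAddCommGroup G]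
    [NormedSpace ℝ G] (c : OrderedFinpartition N)
    (f : ContinuousMultilinearMap ℝ (fun _ : Fin c.length => F) G)
    (p : ∀ i : Fin c.length, ContinuousMultilinearMap ℝ (fun _ : Fin (c.partSize i) => E) F) :
    ‖c.compAlongOrderedFinpartition f p‖ ≤ ‖f‖ * ∏ i, ‖p i‖ := by
  apply ContinuousMultilinearMap.opNorm_le_bound (by positivity) (fun v => ?_)
  rw [OrderedFinpartition.compAlongOrderFinpartition_apply]
  apply (f.le_opNorm _).trans
  rw [mul_assoc, ← c.prod_sigma_eq_prod, ← Finset.prod_mul_distrib]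
  rw [OrderedFinpartition.applyOrderedFinpartition_apply]
  gcongr with m _
  exact (p m).le_opNorm _

/-- Faà di Bruno norm bound, term by term over ordered finpartitions. -/
lemma faa_di_bruno_norm_bound {G : Type*} [NormedAddCommGroup G] [NormedSpace ℝ G]
    (Fn : F → G) (Ψ : E → F) (hF : ContDiff ℝ ∞ Fn) (hΨ : ContDiff ℝ ∞ Ψ) (N : ℕ) (x : E) :
    ‖iteratedFDeriv ℝ N (fun y => Fn (Ψ y)) x‖
      ≤ ∑ c : OrderedFinpartition N,
          ‖iteratedFDeriv ℝ c.length Fn (Ψ x)‖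
            * ∏ i, ‖iteratedFDeriv ℝ (c.partSize i) Ψ x‖ := by
  have hFs : HasFTaylorSeriesUpToOn (∞ : WithTop ℕ∞) Fn (ftaylorSeries ℝ Fn) univ := by
    rw [← ftaylorSeriesWithin_univ]
    exact (hF.contDiffOn).ftaylorSeriesWithin uniqueDiffOn_univ
  have hΨs : HasFTaylorSeriesUpToOn (∞ : WithTop ℕ∞) Ψ (ftaylorSeries ℝ Ψ) univ := by
    rw [← ftaylorSeriesWithin_univ]
    exact (hΨ.contDiffOn).ftaylorSeriesWithin uniqueDiffOn_univ
  have hcomp := hFs.comp hΨs (mapsTo_univ Ψ univ)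
  have heq := hcomp.eq_iteratedFDerivWithin_of_uniqueDiffOn (m := N)
    (by exact_mod_cast le_top) uniqueDiffOn_univ (mem_univ x)
  rw [iteratedFDerivWithin_univ] at heq
  have hfun : (fun y => Fn (Ψ y)) = Fn ∘ Ψ := rfl
  rw [hfun, ← heq]
  refine (norm_sum_le _ _).trans ?_
  apply Finset.sum_le_sum
  intro c _
  exact norm_compAlongOrderedFinpartition_le c _ _

/-- Core arithmetic estimate for a single Faà di Bruno term. -/
lemma partition_term_est {N : ℕ} (hN2 : 2 ≤ N) (c : OrderedFinpartition N)
    (AA BB : ℕ → ℝ) (hBBnn : ∀ l, 0 ≤ BB l)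
    (C1 C2 A1 AN β G : ℝ) (hC1 : 1 ≤ C1) (hC2 : 1 ≤ C2)
    (hA1 : 0 ≤ A1) (hAN : 0 ≤ AN) (hβ : 0 ≤ β) (hG : 0 ≤ G)
    (hA : ∀ k : ℕ, 1 ≤ k → k ≤ N →
      AA k ≤ C2 * (A1 ^ (((N:ℝ) - k)/((N:ℝ)-1)) * AN ^ (((k:ℝ)-1)/((N:ℝ)-1))))
    (hB : ∀ l : ℕ, 1 ≤ l → l ≤ N →
      BB l ≤ C1 * (β ^ (((N:ℝ) - l)/((N:ℝ)-1)) * G ^ (((l:ℝ)-1)/((N:ℝ)-1)))) :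
    AA c.length * ∏ i, BB (c.partSize i) ≤ C2 * C1 ^ N * (A1 * G + AN * β ^ N) := by
  have hD1 : (0:ℝ) < (N:ℝ) - 1 := by
    have : (2:ℝ) ≤ (N:ℝ) := by exact_mod_cast hN2
    linarith
  have hL1 : 1 ≤ c.length := c.length_pos (by omega)
  have hLN : c.length ≤ N := c.length_le
  have hkR : (1:ℝ) ≤ (c.length:ℝ) := by exact_mod_cast hL1
  have hkNR : (c.length:ℝ) ≤ (N:ℝ) := by exact_mod_cast hLN
  have hszpos : ∀ i : Fin c.length, 1 ≤ c.partSize i := fun i =>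
    Nat.pos_of_ne_zero (c.neZero_partSize i).out
  have hszle : ∀ i : Fin c.length, c.partSize i ≤ N := fun i => c.partSize_le i
  have hAL := hA c.length hL1 hLN
  set θ : ℝ := ((N:ℝ) - (c.length:ℝ))/((N:ℝ)-1) with hθdef
  have hθnn : 0 ≤ θ := by
    rw [hθdef]; apply div_nonneg <;> linarith
  have hθ1 : θ ≤ 1 := by
    rw [hθdef, div_le_one hD1]; linarith
  have h1θ : ((c.length:ℝ)-1)/((N:ℝ)-1) = 1 - θ := by
    rw [hθdef]; field_simp
    ring
  rw [h1θ] at hAL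
  -- bound the product of the `BB`s
  have hBnnfun : ∀ i : Fin c.length, (0:ℝ)
      ≤ C1 * (β ^ (((N:ℝ) - (c.partSize i:ℝ))/((N:ℝ)-1))
        * G ^ (((c.partSize i:ℝ)-1)/((N:ℝ)-1))) := by
    intro i
    have h1 := Real.rpow_nonneg hβ (((N:ℝ) - (c.partSize i:ℝ))/((N:ℝ)-1))
    have h2 := Real.rpow_nonneg hG (((c.partSize i:ℝ)-1)/((N:ℝ)-1))
    exact mul_nonneg (by linarith) (mul_nonneg h1 h2)
  have hprod1 : ∏ i, BB (c.partSize i)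
      ≤ ∏ i : Fin c.length, (C1 * (β ^ (((N:ℝ) - (c.partSize i:ℝ))/((N:ℝ)-1))
          * G ^ (((c.partSize i:ℝ)-1)/((N:ℝ)-1)))) :=
    Finset.prod_le_prod (fun i _ => hBBnn _) (fun i _ => hB _ (hszpos i) (hszle i))
  have hsumsz : ∑ i : Fin c.length, ((c.partSize i : ℝ)) = (N:ℝ) := by
    exact_mod_cast c.sum_partSize
  have hsum1 : ∑ i : Fin c.length, ((N:ℝ) - (c.partSize i:ℝ))/((N:ℝ)-1)
      = (N:ℝ) * (1 - θ) := by
    rw [← Finset.sum_div, Finset.sum_sub_distrib, hsumsz, Finset.sum_const,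
      Finset.card_univ, Fintype.card_fin, nsmul_eq_mul, ← h1θ]
    ring
  have hsum2 : ∑ i : Fin c.length, ((c.partSize i:ℝ) - 1)/((N:ℝ)-1) = θ := by
    rw [← Finset.sum_div, Finset.sum_sub_distrib, hsumsz, Finset.sum_const,
      Finset.card_univ, Fintype.card_fin, nsmul_eq_mul, mul_one, hθdef]
  have hprod2 : ∏ i : Fin c.length, (C1 * (β ^ (((N:ℝ) - (c.partSize i:ℝ))/((N:ℝ)-1))
        * G ^ (((c.partSize i:ℝ)-1)/((N:ℝ)-1))))
      = C1 ^ c.length * ((β ^ N) ^ (1-θ) * G ^ θ) := by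
    rw [Finset.prod_mul_distrib, Finset.prod_const, Finset.card_univ, Fintype.card_fin,
      Finset.prod_mul_distrib]
    rw [← rpow_finset_sum β hβ _ _ (fun i _ => by
        apply div_nonneg ?_ hD1.le
        have : (c.partSize i : ℝ) ≤ (N:ℝ) := by exact_mod_cast hszle i
        linarith),
      ← rpow_finset_sum G hG _ _ (fun i _ => by
        apply div_nonneg ?_ hD1.le
        have : (1:ℝ) ≤ (c.partSize i : ℝ) := by exact_mod_cast hszpos i
        linarith)]
    rw [hsum1, hsum2, Real.rpow_mul hβ, Real.rpow_natCast]
  have hT2 : ∏ i, BB (c.partSize i) ≤ C1 ^ c.length * ((β ^ N) ^ (1-θ) * G ^ θ) :=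
    hprod1.trans (le_of_eq hprod2)
  have hβN : (0:ℝ) ≤ β ^ N := pow_nonneg hβ N
  have hAAnn0 : 0 ≤ ∏ i, BB (c.partSize i) := Finset.prod_nonneg (fun i _ => hBBnn _)
  have hT1nn : (0:ℝ) ≤ C2 * (A1 ^ θ * AN ^ (1-θ)) := by
    have h1 := Real.rpow_nonneg hA1 θ
    have h2 := Real.rpow_nonneg hAN (1-θ)
    exact mul_nonneg (by linarith) (mul_nonneg h1 h2)
  calc AA c.length * ∏ i, BB (c.partSize i)
      ≤ (C2 * (A1 ^ θ * AN ^ (1-θ))) * (C1 ^ c.length * ((β ^ N) ^ (1-θ) * G ^ θ)) := by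
        apply mul_le_mul hAL hT2 hAAnn0 hT1nn
    _ = (C2 * C1 ^ c.length) * ((A1 ^ θ * G ^ θ) * (AN ^ (1-θ) * (β ^ N) ^ (1-θ))) := by
        ring
    _ = (C2 * C1 ^ c.length) * ((A1 * G) ^ θ * (AN * β ^ N) ^ (1-θ)) := by
        rw [← Real.mul_rpow hA1 hG, ← Real.mul_rpow hAN hβN]
    _ ≤ (C2 * C1 ^ c.length) * (A1 * G + AN * β ^ N) := by
        have hgm := Real.geom_mean_le_arith_mean2_weighted (w₁ := θ) (w₂ := 1-θ)
          (p₁ := A1 * G) (p₂ := AN * β ^ N) hθnn (by linarith)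
          (mul_nonneg hA1 hG) (mul_nonneg hAN hβN) (by ring)
        have h2 : θ * (A1*G) + (1-θ) * (AN*β^N) ≤ (A1*G) + (AN*β^N) := by
          nlinarith [mul_nonneg hA1 hG, mul_nonneg hAN hβN]
        have hC2C1 : (0:ℝ) ≤ C2 * C1 ^ c.length := by positivity
        exact mul_le_mul_of_nonneg_left (hgm.trans h2) hC2C1
    _ ≤ C2 * C1 ^ N * (A1 * G + AN * β ^ N) := by
        have hp : C1 ^ c.length ≤ C1 ^ N := pow_le_pow_right₀ hC1 hLN
        have hS : (0:ℝ) ≤ A1 * G + AN * β ^ N := by positivity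
        have hC2nn : (0:ℝ) ≤ C2 := by linarith
        apply mul_le_mul_of_nonneg_right _ hS
        exact mul_le_mul_of_nonneg_left hp hC2nn

/-- Transfer the interpolation inequality for `fderiv u` to derivatives of `u` of order
`1, ..., N`. -/
lemma interp_deriv_transfer {N : ℕ} (hN2 : 2 ≤ N) {C : ℝ}
    (hC : ∀ (v : E → (E →L[ℝ] F)), ContDiff ℝ ∞ v → ∀ c0 cM D : ℝ,
      (∀ x, ‖v x‖ ≤ c0) → (∀ x, ‖iteratedFDeriv ℝ (N-1) v x‖ ≤ cM) →
      (∀ j, j ≤ N-1 → ∀ x, ‖iteratedFDeriv ℝ j v x‖ ≤ D) →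
      ∀ j, j ≤ N-1 → ∀ x, ‖iteratedFDeriv ℝ j v x‖
        ≤ C * (c0 ^ ((((N-1:ℕ):ℝ) - j)/((N-1:ℕ):ℝ)) * cM ^ ((j:ℝ)/((N-1:ℕ):ℝ))))
    (u : E → F) (hu : ContDiff ℝ ∞ u) (a1 aN : ℝ)
    (ha1 : ∀ x, ‖iteratedFDeriv ℝ 1 u x‖ ≤ a1)
    (haN : ∀ x, ∀ j : ℕ, 1 ≤ j → j ≤ N → ‖iteratedFDeriv ℝ j u x‖ ≤ aN) :
    ∀ k : ℕ, 1 ≤ k → k ≤ N → ∀ x, ‖iteratedFDeriv ℝ k u x‖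
      ≤ C * (a1 ^ (((N:ℝ) - k)/((N:ℝ)-1)) * aN ^ (((k:ℝ)-1)/((N:ℝ)-1))) := by
  intro k hk1 hkN x
  have hud : ContDiff ℝ ∞ (fderiv ℝ u) := hu.fderiv_right (by exact_mod_cast le_rfl)
  have hc0 : ∀ z, ‖fderiv ℝ u z‖ ≤ a1 := by
    intro z
    have e : ‖fderiv ℝ u z‖ = ‖iteratedFDeriv ℝ 1 u z‖ := by
      rw [← norm_iteratedFDeriv_fderiv (n := 0), norm_iteratedFDeriv_zero]
    rw [e]; exact ha1 z
  have hcM : ∀ z, ‖iteratedFDeriv ℝ (N-1) (fderiv ℝ u) z‖ ≤ aN := by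
    intro z
    rw [norm_iteratedFDeriv_fderiv, (by omega : N-1+1 = N)]
    exact haN z N (by omega) le_rfl
  have hD : ∀ j, j ≤ N-1 → ∀ z, ‖iteratedFDeriv ℝ j (fderiv ℝ u) z‖ ≤ aN := by
    intro j hj z
    rw [norm_iteratedFDeriv_fderiv]
    exact haN z (j+1) (by omega) (by omega)
  have happ := hC (fderiv ℝ u) hud a1 aN aN hc0 hcM hD (k-1) (by omega) x
  rw [norm_iteratedFDeriv_fderiv, (by omega : k-1+1 = k)] at happ
  rw [Nat.cast_sub (by omega : 1 ≤ N), Nat.cast_sub (by omega : 1 ≤ k), Nat.cast_one] at happ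
  rw [(by ring : (N:ℝ) - 1 - ((k:ℝ) - 1) = (N:ℝ) - k)] at happ
  exact happ


end Aux

set_option maxHeartbeats 2000000

/-- **Hölder norms of compositions** (Lemma A.1 of De Lellis–Kwon). For smooth
`F : ℝ^m → ℝ` and `Ψ : ℝⁿ → ℝ^m` with bounded derivatives, the `N`-th derivative of the
composition is controlled by
`‖∇F‖₀‖∇Ψ‖_{N-1} + ‖∇F‖_{N-1}‖Ψ‖₀^{N-1}‖Ψ‖_N` and by
`‖∇F‖₀‖∇Ψ‖_{N-1} + ‖∇F‖_{N-1}‖∇Ψ‖₀^N`,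
with a constant depending only on `n`, `m`, `N`. -/
theorem holder_norm_composition (n m N : ℕ) (hN : 1 ≤ N) :
    ∃ K : ℝ, 0 < K ∧
      ∀ (F : (Fin m → ℝ) → ℝ) (Ψ : (Fin n → ℝ) → (Fin m → ℝ)),
        ContDiff ℝ (⊤ : ℕ∞) F → ContDiff ℝ (⊤ : ℕ∞) Ψ →
        ∀ (aF1 aFN bgrad0 bgradN b0 bN : ℝ),
          -- ‖∇F‖₀ ≤ aF1
          (∀ x, ‖iteratedFDeriv ℝ 1 F x‖ ≤ aF1) →
          -- ‖∇F‖_{N-1} ≤ aFN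
          (∀ x, ∀ j : ℕ, 1 ≤ j → j ≤ N → ‖iteratedFDeriv ℝ j F x‖ ≤ aFN) →
          -- ‖∇Ψ‖₀ ≤ bgrad0
          (∀ x, ‖iteratedFDeriv ℝ 1 Ψ x‖ ≤ bgrad0) →
          -- ‖∇Ψ‖_{N-1} ≤ bgradN
          (∀ x, ∀ j : ℕ, 1 ≤ j → j ≤ N → ‖iteratedFDeriv ℝ j Ψ x‖ ≤ bgradN) →
          -- ‖Ψ‖₀ ≤ b0
          (∀ x, ‖Ψ x‖ ≤ b0) →
          -- ‖Ψ‖_N ≤ bN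
          (∀ x, ∀ j : ℕ, j ≤ N → ‖iteratedFDeriv ℝ j Ψ x‖ ≤ bN) →
          ∀ x,
            ‖iteratedFDeriv ℝ N (fun y => F (Ψ y)) x‖
              ≤ K * (aF1 * bgradN + aFN * b0 ^ (N - 1) * bN) ∧
            ‖iteratedFDeriv ℝ N (fun y => F (Ψ y)) x‖
              ≤ K * (aF1 * bgradN + aFN * bgrad0 ^ N) := by

  rcases eq_or_lt_of_le hN with hN1 | hN2
  · -- the case N = 1 : direct chain rule estimate
    subst hN1
    refine ⟨1, one_pos, ?_⟩
    intro F Ψ hF hΨ aF1 aFN bgrad0 bgradN b0 bN haF1 haFN hbgrad0 hbgradN hb0 hbN x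
    have haFNnn : 0 ≤ aFN := (norm_nonneg _).trans (haFN (Ψ x) 1 le_rfl le_rfl)
    have hbNnn : 0 ≤ bN := (norm_nonneg _).trans (hbN x 0 (by omega))
    have hbgrad0nn : 0 ≤ bgrad0 := (norm_nonneg _).trans (hbgrad0 x)
    have hdF : DifferentiableAt ℝ F (Ψ x) := (hF.differentiable (by simp)).differentiableAt
    have hdΨ : DifferentiableAt ℝ Ψ x := (hΨ.differentiable (by simp)).differentiableAt
    have hmain : ‖iteratedFDeriv ℝ 1 (fun y => F (Ψ y)) x‖ ≤ aF1 * bgradN := by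
      have e : ‖iteratedFDeriv ℝ 1 (fun y => F (Ψ y)) x‖
          = ‖fderiv ℝ (fun y => F (Ψ y)) x‖ := by
        rw [← norm_iteratedFDeriv_fderiv (n := 0), norm_iteratedFDeriv_zero]
      have ecomp : fderiv ℝ (fun y => F (Ψ y)) x
          = (fderiv ℝ F (Ψ x)).comp (fderiv ℝ Ψ x) := by
        exact fderiv_comp x hdF hdΨ
      rw [e, ecomp]
      have h1 : ‖fderiv ℝ F (Ψ x)‖ ≤ aF1 := by
        have e1 : ‖fderiv ℝ F (Ψ x)‖ = ‖iteratedFDeriv ℝ 1 F (Ψ x)‖ := by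
          rw [← norm_iteratedFDeriv_fderiv (n := 0), norm_iteratedFDeriv_zero]
        rw [e1]; exact haF1 (Ψ x)
      have h2 : ‖fderiv ℝ Ψ x‖ ≤ bgradN := by
        have e2 : ‖fderiv ℝ Ψ x‖ = ‖iteratedFDeriv ℝ 1 Ψ x‖ := by
          rw [← norm_iteratedFDeriv_fderiv (n := 0), norm_iteratedFDeriv_zero]
        rw [e2]; exact hbgradN x 1 le_rfl le_rfl
      have h3 := ContinuousLinearMap.opNorm_comp_le (fderiv ℝ F (Ψ x)) (fderiv ℝ Ψ x)
      have h4 : (0:ℝ) ≤ ‖fderiv ℝ Ψ x‖ := norm_nonneg _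
      calc ‖(fderiv ℝ F (Ψ x)).comp (fderiv ℝ Ψ x)‖
          ≤ ‖fderiv ℝ F (Ψ x)‖ * ‖fderiv ℝ Ψ x‖ := h3
        _ ≤ aF1 * bgradN := by
            apply mul_le_mul h1 h2 h4 ((norm_nonneg _).trans h1)
    constructor
    · have : (0:ℝ) ≤ aFN * b0 ^ (1-1) * bN := by
        simp only [Nat.sub_self, pow_zero, mul_one]
        exact mul_nonneg haFNnn hbNnn
      calc ‖iteratedFDeriv ℝ 1 (fun y => F (Ψ y)) x‖ ≤ aF1 * bgradN := hmain
        _ ≤ 1 * (aF1 * bgradN + aFN * b0 ^ (1-1) * bN) := by linarith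
    · have : (0:ℝ) ≤ aFN * bgrad0 ^ 1 := by
        rw [pow_one]; exact mul_nonneg haFNnn hbgrad0nn
      calc ‖iteratedFDeriv ℝ 1 (fun y => F (Ψ y)) x‖ ≤ aF1 * bgradN := hmain
        _ ≤ 1 * (aF1 * bgradN + aFN * bgrad0 ^ 1) := by linarith
  · -- the case 2 ≤ N
    have hN2' : 2 ≤ N := hN2
    obtain ⟨C1, hC11, hC1⟩ := interp_rpow (E := (Fin n → ℝ))
      (F := (Fin n → ℝ) →L[ℝ] (Fin m → ℝ)) (N-1) (by omega)
    obtain ⟨C2, hC21, hC2⟩ := interp_rpow (E := (Fin m → ℝ))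
      (F := (Fin m → ℝ) →L[ℝ] ℝ) (N-1) (by omega)
    obtain ⟨C3, hC31, hC3⟩ := interp_rpow (E := (Fin n → ℝ))
      (F := (Fin m → ℝ)) N (by omega)
    obtain ⟨cardR, hcardR⟩ : ∃ R : ℝ, R = (Fintype.card (OrderedFinpartition N) : ℝ) :=
      ⟨_, rfl⟩
    have hcardnn : 0 ≤ cardR := by rw [hcardR]; positivity
    set K : ℝ := (cardR + 1) * (C2 * C1 ^ N * (C3 ^ N + 1)) with hKdef
    have hC1pos : (0:ℝ) < C1 := by linarith
    have hC2pos : (0:ℝ) < C2 := by linarith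
    have hC3pos : (0:ℝ) < C3 := by linarith
    have hKpos : 0 < K := by
      rw [hKdef]
      apply mul_pos (by linarith)
      apply mul_pos (mul_pos hC2pos (pow_pos hC1pos N))
      positivity
    refine ⟨K, hKpos, ?_⟩
    intro F Ψ hF hΨ aF1 aFN bgrad0 bgradN b0 bN haF1 haFN hbgrad0 hbgradN hb0 hbN x
    have hF' : ContDiff ℝ ∞ F := hF.of_le (by simp)
    have hΨ' : ContDiff ℝ ∞ Ψ := hΨ.of_le (by simp)
    -- nonnegativity of the constants
    have haF1nn : 0 ≤ aF1 := (norm_nonneg _).trans (haF1 (Ψ x))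
    have haFNnn : 0 ≤ aFN := (norm_nonneg _).trans (haFN (Ψ x) 1 le_rfl (by omega))
    have hbgrad0nn : 0 ≤ bgrad0 := (norm_nonneg _).trans (hbgrad0 x)
    have hbgradNnn : 0 ≤ bgradN := (norm_nonneg _).trans (hbgradN x 1 le_rfl (by omega))
    have hb0nn : 0 ≤ b0 := (norm_nonneg _).trans (hb0 x)
    have hbNnn : 0 ≤ bN := (norm_nonneg _).trans (hbN x 0 (by omega))
    have hNne : ((N:ℝ)) ≠ 0 := by positivity
    -- interpolation bounds for the derivatives of F and Ψ
    have hAbound := interp_deriv_transfer hN2' hC2 F hF' aF1 aFN haF1 haFN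
    have hBbound2 := interp_deriv_transfer hN2' hC1 Ψ hΨ' bgrad0 bgradN hbgrad0 hbgradN
    -- the norm functions at the point x
    set AA : ℕ → ℝ := fun k => ‖iteratedFDeriv ℝ k F (Ψ x)‖ with hAA
    set BB : ℕ → ℝ := fun l => ‖iteratedFDeriv ℝ l Ψ x‖ with hBB
    have hBBnn : ∀ l, 0 ≤ BB l := fun l => norm_nonneg _
    have hsum := faa_di_bruno_norm_bound F Ψ hF' hΨ' N x
    -- second inequality (with bgrad0)
    have key2 : ∀ c : OrderedFinpartition N,
        AA c.length * ∏ i, BB (c.partSize i)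
          ≤ C2 * C1 ^ N * (aF1 * bgradN + aFN * bgrad0 ^ N) := by
      intro c
      exact partition_term_est hN2' c AA BB hBBnn C1 C2 aF1 aFN bgrad0 bgradN hC11 hC21
        haF1nn haFNnn hbgrad0nn hbgradNnn
        (fun k h1 h2 => hAbound k h1 h2 (Ψ x))
        (fun l h1 h2 => hBbound2 l h1 h2 x)
    -- first inequality (with b0, bN) via the extra interpolation of ∇Ψ
    set β1 : ℝ := C3 * (b0 ^ (((N:ℝ)-1)/(N:ℝ)) * bN ^ ((1:ℝ)/(N:ℝ))) with hβ1def
    have hβ1nn : 0 ≤ β1 := by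
      have h1 := Real.rpow_nonneg hb0nn (((N:ℝ)-1)/(N:ℝ))
      have h2 := Real.rpow_nonneg hbNnn ((1:ℝ)/(N:ℝ))
      rw [hβ1def]
      exact mul_nonneg (by linarith) (mul_nonneg h1 h2)
    have hβ1 : ∀ z, ‖iteratedFDeriv ℝ 1 Ψ z‖ ≤ β1 := by
      intro z
      have := hC3 Ψ hΨ' b0 bN bN hb0 (fun y => hbN y N le_rfl)
        (fun j hj y => hbN y j hj) 1 (by omega) z
      rw [Nat.cast_one] at this
      rw [hβ1def]
      exact this
    have hBbound1 := interp_deriv_transfer hN2' hC1 Ψ hΨ' β1 bgradN hβ1 hbgradN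
    have key1 : ∀ c : OrderedFinpartition N,
        AA c.length * ∏ i, BB (c.partSize i)
          ≤ C2 * C1 ^ N * (aF1 * bgradN + aFN * β1 ^ N) := by
      intro c
      exact partition_term_est hN2' c AA BB hBBnn C1 C2 aF1 aFN β1 bgradN hC11 hC21
        haF1nn haFNnn hβ1nn hbgradNnn
        (fun k h1 h2 => hAbound k h1 h2 (Ψ x))
        (fun l h1 h2 => hBbound1 l h1 h2 x)
    -- β1 ^ N = C3 ^ N * (b0 ^ (N-1) * bN)
    have hβ1N : β1 ^ N = C3 ^ N * (b0 ^ (N-1) * bN) := by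
      rw [hβ1def, mul_pow, mul_pow]
      congr 1
      have h1 : (b0 ^ (((N:ℝ)-1)/(N:ℝ)))^N = b0 ^ (N-1) := by
        rw [← Real.rpow_natCast (b0 ^ (((N:ℝ)-1)/(N:ℝ))) N, ← Real.rpow_mul hb0nn]
        rw [(by field_simp : (((N:ℝ)-1)/(N:ℝ)) * (N:ℝ) = (N:ℝ)-1)]
        rw [(by rw [Nat.cast_sub (by omega : 1 ≤ N), Nat.cast_one] :
          ((N:ℝ)-1) = ((N-1:ℕ):ℝ)), Real.rpow_natCast]
      have h2 : (bN ^ ((1:ℝ)/(N:ℝ)))^N = bN := by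
        rw [← Real.rpow_natCast (bN ^ ((1:ℝ)/(N:ℝ))) N, ← Real.rpow_mul hbNnn]
        rw [(by field_simp : ((1:ℝ)/(N:ℝ)) * (N:ℝ) = 1), Real.rpow_one]
      rw [h1, h2]
    -- summing up
    have hcard : ((Finset.univ : Finset (OrderedFinpartition N)).card : ℝ) = cardR := by
      rw [hcardR, Finset.card_univ]
    have hsum2 : ‖iteratedFDeriv ℝ N (fun y => F (Ψ y)) x‖
        ≤ cardR * (C2 * C1 ^ N * (aF1 * bgradN + aFN * bgrad0 ^ N)) := by
      refine hsum.trans ?_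
      have := Finset.sum_le_card_nsmul (Finset.univ : Finset (OrderedFinpartition N))
        (fun c => AA c.length * ∏ i, BB (c.partSize i))
        (C2 * C1 ^ N * (aF1 * bgradN + aFN * bgrad0 ^ N))
        (fun c _ => key2 c)
      rw [nsmul_eq_mul, hcard] at this
      exact this
    have hsum1 : ‖iteratedFDeriv ℝ N (fun y => F (Ψ y)) x‖
        ≤ cardR * (C2 * C1 ^ N * (aF1 * bgradN + aFN * β1 ^ N)) := by
      refine hsum.trans ?_
      have := Finset.sum_le_card_nsmul (Finset.univ : Finset (OrderedFinpartition N))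
        (fun c => AA c.length * ∏ i, BB (c.partSize i))
        (C2 * C1 ^ N * (aF1 * bgradN + aFN * β1 ^ N))
        (fun c _ => key1 c)
      rw [nsmul_eq_mul, hcard] at this
      exact this
    have hP : (0:ℝ) ≤ aF1 * bgradN := mul_nonneg haF1nn hbgradNnn
    have hW1 : (1:ℝ) ≤ C2 * C1 ^ N := by
      have := one_le_pow₀ (n := N) hC11
      nlinarith
    have hV1 : (1:ℝ) ≤ C3 ^ N := one_le_pow₀ hC31
    constructor
    · -- first target inequality
      refine hsum1.trans ?_
      rw [hβ1N]
      have hQ' : (0:ℝ) ≤ aFN * b0 ^ (N-1) * bN :=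
        mul_nonneg (mul_nonneg haFNnn (pow_nonneg hb0nn _)) hbNnn
      have step1 : aF1 * bgradN + aFN * (C3 ^ N * (b0 ^ (N-1) * bN))
          ≤ (C3 ^ N + 1) * (aF1 * bgradN + aFN * b0 ^ (N-1) * bN) := by
        nlinarith [mul_nonneg (by linarith : (0:ℝ) ≤ C3 ^ N) hQ',
          mul_nonneg (by linarith : (0:ℝ) ≤ C3 ^ N) hP]
      have hWnn : (0:ℝ) ≤ C2 * C1 ^ N := by linarith
      calc cardR * (C2 * C1 ^ N * (aF1 * bgradN + aFN * (C3 ^ N * (b0 ^ (N-1) * bN))))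
          ≤ cardR * (C2 * C1 ^ N * ((C3 ^ N + 1) * (aF1 * bgradN + aFN * b0 ^ (N-1) * bN))) := by
            apply mul_le_mul_of_nonneg_left _ hcardnn
            exact mul_le_mul_of_nonneg_left step1 hWnn
        _ = (cardR * (C2 * C1 ^ N * (C3 ^ N + 1)))
              * (aF1 * bgradN + aFN * b0 ^ (N-1) * bN) := by ring
        _ ≤ K * (aF1 * bgradN + aFN * b0 ^ (N-1) * bN) := by
            have hS : (0:ℝ) ≤ aF1 * bgradN + aFN * b0 ^ (N-1) * bN := by linarith
            apply mul_le_mul_of_nonneg_right _ hS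
            rw [hKdef]
            have hid : (cardR + 1) * (C2 * C1 ^ N * (C3 ^ N + 1))
                - cardR * (C2 * C1 ^ N * (C3 ^ N + 1))
                = C2 * C1 ^ N * (C3 ^ N + 1) := by ring
            nlinarith [mul_nonneg hWnn (by linarith : (0:ℝ) ≤ C3 ^ N + 1)]
    · -- second target inequality
      refine hsum2.trans ?_
      have hQ : (0:ℝ) ≤ aFN * bgrad0 ^ N := mul_nonneg haFNnn (pow_nonneg hbgrad0nn _)
      have hS : (0:ℝ) ≤ aF1 * bgradN + aFN * bgrad0 ^ N := by linarith
      have hWnn : (0:ℝ) ≤ C2 * C1 ^ N := by linarith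
      calc cardR * (C2 * C1 ^ N * (aF1 * bgradN + aFN * bgrad0 ^ N))
          = (cardR * (C2 * C1 ^ N)) * (aF1 * bgradN + aFN * bgrad0 ^ N) := by ring
        _ ≤ K * (aF1 * bgradN + aFN * bgrad0 ^ N) := by
            apply mul_le_mul_of_nonneg_right _ hS
            rw [hKdef]
            nlinarith [mul_nonneg (mul_nonneg hcardnn hWnn) (by linarith : (0:ℝ) ≤ C3 ^ N),
              mul_nonneg hWnn (by linarith : (0:ℝ) ≤ C3 ^ N + 1)]
end
end
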